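/- Let A be a commutative ring, I and L ideals of A, and L' ⊆ L an ideal such that I ∩ L' = I·L'. Then Q(L,I) is isomorphic as an A-module to Q_{A/L'}(L,I), the corresponding module computed in the quotient ring A/L' for the images of L and I. -/

import Mathlib

open Submodule

variable (A : Type*) [CommRing A]

/-- The natural map `I/(I² + I·L) → (I+L)/(I² + L)` induced by the inclusion `I ⊆ I + L`. -/
noncomputable def qIota (L I : Ideal A) :
    (↥I ⧸ Submodule.comap I.subtype (I ^ 2 + I * L)) →ₗ[A]
      (↥(I + L) ⧸ Submodule.comap (I + L).subtype (I ^ 2 + L)) :=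
  Submodule.liftQ _
    ((Submodule.comap (I + L).subtype (I ^ 2 + L)).mkQ.comp
      (Submodule.inclusion (le_sup_left : I ≤ I + L)))
    (by
      intro x hx
      have hle : I ^ 2 + I * L ≤ I ^ 2 + L := by
        rw [Submodule.add_eq_sup, Submodule.add_eq_sup]
        exact sup_le_sup_left (by first | exact Ideal.mul_le_inf.trans inf_le_right | exact Ideal.mul_le_right) _
      simp only [LinearMap.mem_ker, LinearMap.comp_apply, Submodule.mkQ_apply,
        Submodule.Quotient.mk_eq_zero, Submodule.mem_comap, Submodule.coe_subtype,
        Submodule.coe_inclusion]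
      exact hle hx)

/-- The restriction map `Hom_A((I+L)/(I²+L), A/(I+L)) → Hom_A(I/(I²+I·L), A/(I+L))`. -/
noncomputable def qRes (L I : Ideal A) :
    ((↥(I + L) ⧸ Submodule.comap (I + L).subtype (I ^ 2 + L)) →ₗ[A] A ⧸ (I + L)) →ₗ[A]
      ((↥I ⧸ Submodule.comap I.subtype (I ^ 2 + I * L)) →ₗ[A] A ⧸ (I + L)) :=
  LinearMap.lcomp A (A ⧸ (I + L)) (qIota A L I)

/-- The module `Q(L,I)`: the cokernel of the restriction map
`Hom_A((I+L)/(I²+L), A/(I+L)) → Hom_A(I/(I²+I·L), A/(I+L))`. -/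
noncomputable abbrev Qmod (L I : Ideal A) :=
  ((↥I ⧸ Submodule.comap I.subtype (I ^ 2 + I * L)) →ₗ[A] A ⧸ (I + L)) ⧸
    LinearMap.range (qRes A L I)

/-! ### Auxiliary machinery -/

section QuotMapEquiv

variable {R S : Type*} [CommRing R] [CommRing S] [Algebra R S]
variable {M N : Type*} [AddCommGroup M] [Module R M]
  [AddCommGroup N] [Module S N] [Module R N] [IsScalarTower R S N]

/-- Quotient equivalence along a surjective linear map. -/
noncomputable def quotMapEquiv (f : M →ₗ[R] N) (hf : Function.Surjective f)
    (q : Submodule S N) (p : Submodule R M)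
    (hp : p = (q.restrictScalars R).comap f) :
    (M ⧸ p) ≃ₗ[R] (N ⧸ q) :=
  LinearEquiv.ofBijective
    (p.liftQ ((q.mkQ.restrictScalars R).comp f)
      (by
        intro x hx
        simp only [LinearMap.mem_ker, LinearMap.comp_apply, LinearMap.restrictScalars_apply,
          Submodule.mkQ_apply, Submodule.Quotient.mk_eq_zero]
        rw [hp] at hx
        exact hx))
    ⟨by
      rw [← LinearMap.ker_eq_bot]
      apply Submodule.ker_liftQ_eq_bot
      intro x hx
      rw [hp]
      simp only [LinearMap.mem_ker, LinearMap.comp_apply, LinearMap.restrictScalars_apply,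
        Submodule.mkQ_apply, Submodule.Quotient.mk_eq_zero] at hx
      exact hx,
     by
      intro y
      obtain ⟨n, rfl⟩ := Submodule.Quotient.mk_surjective q y
      obtain ⟨m, rfl⟩ := hf n
      exact ⟨Submodule.Quotient.mk m, rfl⟩⟩

@[simp]
lemma quotMapEquiv_mk (f : M →ₗ[R] N) (hf : Function.Surjective f)
    (q : Submodule S N) (p : Submodule R M)
    (hp : p = (q.restrictScalars R).comap f) (x : M) :
    quotMapEquiv f hf q p hp (Submodule.Quotient.mk x) = Submodule.Quotient.mk (f x) :=
  rfl

/-- The identity as an `R`-linear equivalence `M ≃ₗ[R] RestrictScalars R S M`. -/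
noncomputable def toRS (R S M : Type*) [CommRing R] [CommRing S] [Algebra R S]
    [AddCommGroup M] [Module S M] [Module R M] [IsScalarTower R S M] :
    M ≃ₗ[R] RestrictScalars R S M where
  toFun := fun x => x
  invFun := fun x => x
  left_inv _ := rfl
  right_inv _ := rfl
  map_add' _ _ := rfl
  map_smul' r x := (algebraMap_smul S r x).symm

end QuotMapEquiv

section Main

variable {A}
variable (I L L' : Ideal A)

/-- The map `↥K → ↥K'` induced by `Ideal.Quotient.mk L'`. -/
noncomputable def resMap (K : Ideal A) (K' : Ideal (A ⧸ L'))
    (hK : K.map (Ideal.Quotient.mk L') = K') : ↥K →ₗ[A] ↥K' where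
  toFun x := ⟨Ideal.Quotient.mk L' x, hK ▸ Ideal.mem_map_of_mem _ x.2⟩
  map_add' x y := by ext; simp
  map_smul' a x := by
    ext
    simp [Submodule.coe_smul_of_tower, Algebra.smul_def, Ideal.Quotient.algebraMap_eq,
      smul_eq_mul]

lemma resMap_surjective (K : Ideal A) (K' : Ideal (A ⧸ L'))
    (hK : K.map (Ideal.Quotient.mk L') = K') :
    Function.Surjective (resMap L' K K' hK) := by
  rintro ⟨y, hy⟩
  rw [← hK] at hy
  obtain ⟨x, hx, rfl⟩ := (Ideal.mem_map_iff_of_surjective _ Ideal.Quotient.mk_surjective).mp hy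
  exact ⟨⟨x, hx⟩, rfl⟩

lemma map_sum_sq_mul :
    (I ^ 2 + I * L).map (Ideal.Quotient.mk L') =
      (I.map (Ideal.Quotient.mk L')) ^ 2 +
        (I.map (Ideal.Quotient.mk L')) * (L.map (Ideal.Quotient.mk L')) := by
  rw [Submodule.add_eq_sup, Submodule.add_eq_sup, Ideal.map_sup, Ideal.map_pow, Ideal.map_mul]

lemma map_sum_sq_L :
    (I ^ 2 + L).map (Ideal.Quotient.mk L') =
      (I.map (Ideal.Quotient.mk L')) ^ 2 + L.map (Ideal.Quotient.mk L') := by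
  rw [Submodule.add_eq_sup, Submodule.add_eq_sup, Ideal.map_sup, Ideal.map_pow]

lemma map_sum_IL :
    (I + L).map (Ideal.Quotient.mk L') =
      I.map (Ideal.Quotient.mk L') + L.map (Ideal.Quotient.mk L') := by
  rw [Submodule.add_eq_sup, Submodule.add_eq_sup, Ideal.map_sup]

variable (hL' : L' ≤ L) (h : I ⊓ L' = I * L')

include hL' h in
lemma comap_one :
    (Submodule.comap I.subtype (I ^ 2 + I * L) : Submodule A ↥I) =
      ((Submodule.comap (I.map (Ideal.Quotient.mk L')).subtype
          ((I.map (Ideal.Quotient.mk L')) ^ 2 +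
            (I.map (Ideal.Quotient.mk L')) * (L.map (Ideal.Quotient.mk L')))).restrictScalars A).comap
        (resMap L' I _ rfl) := by
  ext x
  simp only [Submodule.mem_comap, Submodule.coe_subtype, Submodule.restrictScalars_mem,
    resMap, LinearMap.coe_mk, AddHom.coe_mk]
  rw [← map_sum_sq_mul I L L', Ideal.mem_quotient_iff_mem_sup]
  constructor
  · intro hx
    exact Submodule.mem_sup_left hx
  · intro hx
    obtain ⟨y, hy, z, hz, hyz⟩ := Submodule.mem_sup.mp hx
    have hsub : I ^ 2 + I * L ≤ I := by
      rw [Submodule.add_eq_sup]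
      exact sup_le (Ideal.pow_le_self two_ne_zero) Ideal.mul_le_left
    have hzI : z ∈ I := by
      have hz2 : z = (x : A) - y := by rw [← hyz]; ring
      rw [hz2]
      exact sub_mem x.2 (hsub hy)
    have hzIL : z ∈ I * L' := by rw [← h]; exact ⟨hzI, hz⟩
    have hzIL2 : z ∈ I * L := Ideal.mul_mono_right hL' hzIL
    have hle : I * L ≤ I ^ 2 + I * L := by
      rw [Submodule.add_eq_sup]; exact le_sup_right
    rw [← hyz]
    exact add_mem hy (hle hzIL2)

include hL' in
lemma comap_two :
    (Submodule.comap (I + L).subtype (I ^ 2 + L) : Submodule A ↥(I + L)) =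
      ((Submodule.comap (I.map (Ideal.Quotient.mk L') + L.map (Ideal.Quotient.mk L')).subtype
          ((I.map (Ideal.Quotient.mk L')) ^ 2 + L.map (Ideal.Quotient.mk L'))).restrictScalars A).comap
        (resMap L' (I + L) _ (map_sum_IL I L L')) := by
  ext x
  simp only [Submodule.mem_comap, Submodule.coe_subtype, Submodule.restrictScalars_mem,
    resMap, LinearMap.coe_mk, AddHom.coe_mk]
  rw [← map_sum_sq_L I L L', Ideal.mem_quotient_iff_mem_sup]
  have heq : (I ^ 2 + L) ⊔ L' = I ^ 2 + L := by
    apply sup_eq_left.mpr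
    refine hL'.trans ?_
    rw [Submodule.add_eq_sup]
    exact le_sup_right
  rw [heq]

include hL' in
lemma comap_zero :
    (I + L : Ideal A) =
      ((I.map (Ideal.Quotient.mk L') + L.map (Ideal.Quotient.mk L')).restrictScalars A).comap
        (Algebra.linearMap A (A ⧸ L')) := by
  ext x
  simp only [Submodule.mem_comap, Submodule.restrictScalars_mem, Algebra.linearMap_apply,
    Ideal.Quotient.algebraMap_eq]
  rw [← map_sum_IL I L L', Ideal.mem_quotient_iff_mem_sup]
  have heq : (I + L) ⊔ L' = I + L := by
    apply sup_eq_left.mpr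
    refine hL'.trans ?_
    rw [Submodule.add_eq_sup]
    exact le_sup_right
  rw [heq]

lemma algebraMap_quot_surjective : Function.Surjective (algebraMap A (A ⧸ L')) := by
  rw [Ideal.Quotient.algebraMap_eq]
  exact Ideal.Quotient.mk_surjective

/-- The equivalence on the `I`-side sources. -/
noncomputable def qE1 :
    (↥I ⧸ Submodule.comap I.subtype (I ^ 2 + I * L)) ≃ₗ[A]
      (↥(I.map (Ideal.Quotient.mk L')) ⧸
        Submodule.comap (I.map (Ideal.Quotient.mk L')).subtype
          ((I.map (Ideal.Quotient.mk L')) ^ 2 +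
            (I.map (Ideal.Quotient.mk L')) * (L.map (Ideal.Quotient.mk L')))) :=
  quotMapEquiv (resMap L' I _ rfl) (resMap_surjective L' I _ rfl) _ _
    (comap_one I L L' hL' h)

/-- The equivalence on the `(I+L)`-side sources. -/
noncomputable def qE2 :
    (↥(I + L) ⧸ Submodule.comap (I + L).subtype (I ^ 2 + L)) ≃ₗ[A]
      (↥(I.map (Ideal.Quotient.mk L') + L.map (Ideal.Quotient.mk L')) ⧸
        Submodule.comap (I.map (Ideal.Quotient.mk L') + L.map (Ideal.Quotient.mk L')).subtype
          ((I.map (Ideal.Quotient.mk L')) ^ 2 + L.map (Ideal.Quotient.mk L'))) :=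
  quotMapEquiv (resMap L' (I + L) _ (map_sum_IL I L L'))
    (resMap_surjective L' (I + L) _ (map_sum_IL I L L')) _ _
    (comap_two I L L' hL')

/-- The equivalence on targets. -/
noncomputable def qE0 :
    (A ⧸ (I + L)) ≃ₗ[A]
      ((A ⧸ L') ⧸ (I.map (Ideal.Quotient.mk L') + L.map (Ideal.Quotient.mk L'))) :=
  quotMapEquiv (Algebra.linearMap A (A ⧸ L'))
    (algebraMap_quot_surjective L') _ _
    (comap_zero I L L' hL')

lemma square (x : ↥I ⧸ Submodule.comap I.subtype (I ^ 2 + I * L)) :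
    qIota (A ⧸ L') (L.map (Ideal.Quotient.mk L')) (I.map (Ideal.Quotient.mk L'))
        (qE1 I L L' hL' h x) =
      qE2 I L L' hL' (qIota A L I x) := by
  obtain ⟨y, rfl⟩ := Submodule.Quotient.mk_surjective _ x
  rfl

/-- The equivalence between the Hom modules. -/
noncomputable def qEHom :
    ((↥I ⧸ Submodule.comap I.subtype (I ^ 2 + I * L)) →ₗ[A] A ⧸ (I + L)) ≃ₗ[A]
      ((↥(I.map (Ideal.Quotient.mk L')) ⧸
          Submodule.comap (I.map (Ideal.Quotient.mk L')).subtype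
            ((I.map (Ideal.Quotient.mk L')) ^ 2 +
              (I.map (Ideal.Quotient.mk L')) * (L.map (Ideal.Quotient.mk L')))) →ₗ[A ⧸ L']
        (A ⧸ L') ⧸ (I.map (Ideal.Quotient.mk L') + L.map (Ideal.Quotient.mk L'))) :=
  (LinearEquiv.arrowCongr (qE1 I L L' hL' h) (qE0 I L L' hL')).trans
    (LinearMap.extendScalarsOfSurjectiveEquiv (algebraMap_quot_surjective L'))

lemma range_comap :
    LinearMap.range (qRes A L I) =
      ((LinearMap.range
          (qRes (A ⧸ L') (L.map (Ideal.Quotient.mk L')) (I.map (Ideal.Quotient.mk L')))).restrictScalars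
          A).comap (qEHom I L L' hL' h).toLinearMap := by
  ext g
  simp only [LinearMap.mem_range, Submodule.mem_comap, Submodule.restrictScalars_mem,
    LinearEquiv.coe_coe]
  constructor
  · rintro ⟨H, rfl⟩
    refine ⟨LinearMap.extendScalarsOfSurjective (algebraMap_quot_surjective L')
      ((qE0 I L L' hL').toLinearMap ∘ₗ H ∘ₗ (qE2 I L L' hL').symm.toLinearMap), ?_⟩
    apply LinearMap.ext
    intro x
    obtain ⟨y, rfl⟩ := (qE1 I L L' hL' h).surjective x
    have hsq := square I L L' hL' h y
    simp only [qRes, LinearMap.lcomp_apply, LinearMap.coe_comp, Function.comp_apply,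
      LinearMap.extendScalarsOfSurjective_apply, qEHom, LinearEquiv.trans_apply,
      LinearEquiv.arrowCongr_apply, LinearEquiv.symm_apply_apply, LinearEquiv.coe_coe]
    rw [hsq]
    simp only [LinearEquiv.symm_apply_apply]
  · rintro ⟨H, hH⟩
    refine ⟨(qE0 I L L' hL').symm.toLinearMap ∘ₗ (H.restrictScalars A) ∘ₗ
      (qE2 I L L' hL').toLinearMap, ?_⟩
    apply LinearMap.ext
    intro y
    have hsq := square I L L' hL' h y
    have h2 : (qRes (A ⧸ L') (L.map (Ideal.Quotient.mk L')) (I.map (Ideal.Quotient.mk L')) H)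
        (qE1 I L L' hL' h y) = (qEHom I L L' hL' h) g (qE1 I L L' hL' h y) := by rw [hH]
    simp only [qRes, LinearMap.lcomp_apply, LinearMap.coe_comp, Function.comp_apply,
      LinearEquiv.coe_coe, LinearMap.restrictScalars_apply, qEHom, LinearEquiv.trans_apply,
      LinearMap.extendScalarsOfSurjective_apply, LinearEquiv.arrowCongr_apply,
      LinearEquiv.symm_apply_apply] at h2 ⊢
    rw [← hsq, h2]
    simp only [LinearEquiv.symm_apply_apply]

end Main

/-- If `L' ⊆ L` and `I ∩ L' = I·L'`, then `Q(L,I)` is isomorphic as an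
`A`-module to `Q_{A/L'}(L,I)`, i.e. to `Q` computed in `A/L'` for the images of `L` and `I`. -/
theorem fibers_stmt2 {A : Type*} [CommRing A] (I L L' : Ideal A)
    (hL' : L' ≤ L) (h : I ⊓ L' = I * L') :
    Nonempty
      ((Qmod A L I) ≃ₗ[A]
        RestrictScalars A (A ⧸ L')
          (Qmod (A ⧸ L') (L.map (Ideal.Quotient.mk L')) (I.map (Ideal.Quotient.mk L')))) := by
  refine ⟨LinearEquiv.trans
    (quotMapEquiv (qEHom I L L' hL' h).toLinearMap (qEHom I L L' hL' h).surjective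
      (LinearMap.range (qRes (A ⧸ L') (L.map (Ideal.Quotient.mk L')) (I.map (Ideal.Quotient.mk L'))))
      (LinearMap.range (qRes A L I)) (range_comap I L L' hL' h))
    (toRS A (A ⧸ L') _)⟩
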